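/- arXiv:2109.11403 — 4 statements merged into one kernel-verified Lean document; each statement's English description precedes it below -/
import Mathlib

section
/- Fix T > 0, d ∈ ℕ, and for i = 1,…,d constants θ_i > 0, ρ_i > 0, σ_i ∈ ℝ and m_i ≥ 0. Set κ_i = ((ρ_i − √θ_i)/(ρ_i + √θ_i)) e^{−2T/√θ_i} and a_i(t) = √θ_i (1 + κ_i e^{2t/√θ_i})/(1 − κ_i e^{2t/√θ_i}). Define b(t) = Σ_{i=1}^d √θ_i (σ_i² + m_i) [ (T − t) + √θ_i · log( (1 − κ_i e^{2t/√θ_i}) / (1 − κ_i e^{2T/√θ_i}) ) ] for t ∈ [0, T]. Then b is differentiable on [0, T] with b′(t) = − Σ_{i=1}^d (σ_i² + m_i) a_i(t) for all t ∈ [0, T], and b(T) = 0. -/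
/-! Writing `q = (ρ - √θ)/(ρ + √θ) < 1`, one has `κ e^{2t/√θ} = q e^{2(t - T)/√θ}`, so the
argument `1 - κ e^{2t/√θ}` of the logarithm stays positive for `t ≤ T` and equals the denominator
at `t = T`. With `E = e^{2t/√θ}` and `c = σ² + m`, the derivative of each summand is
`√θ c (-1 - 2κE/(1 - κE)) = -c √θ (1 + κE)/(1 - κE) = -c a(t)`. -/

open Real

lemma one_sub_mul_exp_pos {q x : ℝ} (hq : q < 1) (hx : x ≤ 0) : 0 < 1 - q * exp x := by
  have hexp : exp x ≤ 1 := exp_le_one_iff.mpr hx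
  nlinarith [mul_pos (sub_pos.mpr hq) (exp_pos x)]

lemma sub_div_add_lt_one {ρ s : ℝ} (hρ : 0 < ρ) (hs : 0 < s) : (ρ - s) / (ρ + s) < 1 := by
  rw [div_lt_one (by positivity)]
  linarith

lemma one_sub_kappa_mul_exp_pos {ρ s T t : ℝ} (hρ : 0 < ρ) (hs : 0 < s) (ht : t ≤ T) :
    0 < 1 - (ρ - s) / (ρ + s) * exp (-2 * T / s) * exp (2 * t / s) := by
  have hexp : exp (-2 * T / s) * exp (2 * t / s) = exp (2 * (t - T) / s) := by
    rw [← exp_add]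
    ring_nf
  rw [mul_assoc, hexp]
  exact one_sub_mul_exp_pos (sub_div_add_lt_one hρ hs)
    (div_nonpos_of_nonpos_of_nonneg (by linarith) hs.le)

lemma hasDerivAt_log_one_sub_mul_exp_div {κ s C t : ℝ} (ht : 1 - κ * exp (2 * t / s) ≠ 0)
    (hC : C ≠ 0) :
    HasDerivAt (fun t => log ((1 - κ * exp (2 * t / s)) / C))
      (-(κ * (exp (2 * t / s) * (2 / s))) / (1 - κ * exp (2 * t / s))) t := by
  have hlin : HasDerivAt (fun t : ℝ => 2 * t / s) (2 / s) t := by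
    simpa using ((hasDerivAt_id t).const_mul 2).div_const s
  have hquot := ((hlin.exp.const_mul κ).const_sub 1).div_const C
  convert hquot.log (div_ne_zero ht hC) using 1
  field_simp

lemma hasDerivAt_summand {κ s c T t : ℝ} (hs : s ≠ 0) (ht : 1 - κ * exp (2 * t / s) ≠ 0)
    (hT : 1 - κ * exp (2 * T / s) ≠ 0) :
    HasDerivAt
      (fun t => s * c * ((T - t) + s * log ((1 - κ * exp (2 * t / s)) / (1 - κ * exp (2 * T / s)))))
      (-(c * (s * (1 + κ * exp (2 * t / s)) / (1 - κ * exp (2 * t / s))))) t := by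
  have hlin : HasDerivAt (fun t : ℝ => T - t) (-1) t := by
    simpa using (hasDerivAt_id t).const_sub T
  refine ((hlin.add ((hasDerivAt_log_one_sub_mul_exp_div ht hT).const_mul s)).const_mul
    (s * c)).congr_deriv ?_
  field_simp
  ring

theorem stmt_5_general {T : ℝ} {d : ℕ} (θ ρ σ m : Fin d → ℝ)
    (hθ : ∀ i, 0 < θ i) (hρ : ∀ i, 0 < ρ i) :
    let κ : Fin d → ℝ := fun i =>
      (ρ i - Real.sqrt (θ i)) / (ρ i + Real.sqrt (θ i)) * Real.exp (-2 * T / Real.sqrt (θ i))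
    let a : Fin d → ℝ → ℝ := fun i t =>
      Real.sqrt (θ i) * (1 + κ i * Real.exp (2 * t / Real.sqrt (θ i))) /
        (1 - κ i * Real.exp (2 * t / Real.sqrt (θ i)))
    let b : ℝ → ℝ := fun t => ∑ i, Real.sqrt (θ i) * ((σ i) ^ 2 + m i) *
      ((T - t) + Real.sqrt (θ i) *
        Real.log ((1 - κ i * Real.exp (2 * t / Real.sqrt (θ i))) /
          (1 - κ i * Real.exp (2 * T / Real.sqrt (θ i)))))
    (∀ t ∈ Set.Icc (0 : ℝ) T,
        HasDerivAt b (-∑ i, ((σ i) ^ 2 + m i) * a i t) t) ∧ b T = 0 := by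
  intro κ a b
  have hsqrt : ∀ i, 0 < √(θ i) := fun i => sqrt_pos.mpr (hθ i)
  have hpos : ∀ i, ∀ t ≤ T, 0 < 1 - κ i * exp (2 * t / √(θ i)) := fun i t ht =>
    one_sub_kappa_mul_exp_pos (hρ i) (hsqrt i) ht
  refine ⟨fun t ht => ?_, ?_⟩
  · rw [← Finset.sum_neg_distrib]
    exact HasDerivAt.fun_sum fun i _ => hasDerivAt_summand (hsqrt i).ne'
      (hpos i t ht.2).ne' (hpos i T le_rfl).ne'
  · refine Finset.sum_eq_zero fun i _ => ?_
    rw [div_self (hpos i T le_rfl).ne', log_one]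
    ring

/-- The explicit function
`b(t) = Σᵢ √θᵢ (σᵢ² + mᵢ) [(T − t) + √θᵢ log((1 − κᵢ e^{2t/√θᵢ})/(1 − κᵢ e^{2T/√θᵢ}))]`
is differentiable on `[0, T]` with `b′(t) = −Σᵢ (σᵢ² + mᵢ) aᵢ(t)` and `b(T) = 0`,
where `aᵢ(t) = √θᵢ (1 + κᵢ e^{2t/√θᵢ})/(1 − κᵢ e^{2t/√θᵢ})` and
`κᵢ = ((ρᵢ − √θᵢ)/(ρᵢ + √θᵢ)) e^{−2T/√θᵢ}`. -/
theorem stmt_5 {T : ℝ} (hT : 0 < T) {d : ℕ} (θ ρ σ m : Fin d → ℝ)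
    (hθ : ∀ i, 0 < θ i) (hρ : ∀ i, 0 < ρ i) (hm : ∀ i, 0 ≤ m i) :
    let κ : Fin d → ℝ := fun i =>
      (ρ i - Real.sqrt (θ i)) / (ρ i + Real.sqrt (θ i)) * Real.exp (-2 * T / Real.sqrt (θ i))
    let a : Fin d → ℝ → ℝ := fun i t =>
      Real.sqrt (θ i) * (1 + κ i * Real.exp (2 * t / Real.sqrt (θ i))) /
        (1 - κ i * Real.exp (2 * t / Real.sqrt (θ i)))
    let b : ℝ → ℝ := fun t => ∑ i, Real.sqrt (θ i) * ((σ i) ^ 2 + m i) *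
      ((T - t) + Real.sqrt (θ i) *
        Real.log ((1 - κ i * Real.exp (2 * t / Real.sqrt (θ i))) /
          (1 - κ i * Real.exp (2 * T / Real.sqrt (θ i)))))
    (∀ t ∈ Set.Icc (0 : ℝ) T,
        HasDerivAt b (-∑ i, ((σ i) ^ 2 + m i) * a i t) t) ∧ b T = 0 :=
  stmt_5_general θ ρ σ m hθ hρ
end

section
/- Fix T > 0, κ > 0, γ > 0 and ᾱ ∈ ℝ. Set a = T + κ/γ, c₁ = −(1/2)ᾱT² + aᾱT, h₂(t) = 2κ/(a − t), and h₁(t) = ( c₁ + (1/2)ᾱ t² − a ᾱ t ) / (a − t) for t ∈ [0,T]. Then h₁ is differentiable on [0,T] with h₁′(t) = −ᾱ + h₁(t) h₂(t)/(2κ) for all t ∈ [0,T], and h₁(T) = 0. -/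
/-! The quotient rule settles the ODE: the numerator `N(t) = c₁ + ½ᾱt² − aᾱt` has derivative
`−ᾱ(a − t)`, so `(N/(a − t))′ = −ᾱ + N/(a − t)²`, and `h₂(t)/(2κ) = 1/(a − t)`. The constant `c₁`
is chosen so that `N(T) = 0`. -/

theorem HasDerivAt.div_const_sub {f : ℝ → ℝ} {α a t : ℝ} (hf : HasDerivAt f (-α * (a - t)) t)
    (ht : a - t ≠ 0) :
    HasDerivAt (fun s => f s / (a - s)) (-α + f t / (a - t) ^ 2) t := by
  have hden : HasDerivAt (fun s : ℝ => a - s) (-1) t := by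
    simpa using (hasDerivAt_id t).const_sub a
  refine (hf.div hden ht).congr_deriv ?_
  field_simp
  ring

theorem hasDerivAt_quadratic_numerator (c α a t : ℝ) :
    HasDerivAt (fun s : ℝ => c + 1 / 2 * α * s ^ 2 - a * α * s) (-α * (a - t)) t := by
  have hsq : HasDerivAt (fun s : ℝ => s ^ 2) (2 * t) t := by
    simpa using hasDerivAt_pow 2 t
  refine (((hsq.const_mul (1 / 2 * α)).const_add c).sub
    ((hasDerivAt_id t).const_mul (a * α))).congr_deriv ?_
  ring

theorem stmt_12_general {T κ γ α : ℝ} (hκ : 0 < κ) (hγ : 0 < γ) :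
    let a : ℝ := T + κ / γ
    let c₁ : ℝ := -(1 / 2) * α * T ^ 2 + a * α * T
    let h₂ : ℝ → ℝ := fun t => 2 * κ / (a - t)
    let h₁ : ℝ → ℝ := fun t => (c₁ + (1 / 2) * α * t ^ 2 - a * α * t) / (a - t)
    (∀ t ∈ Set.Icc (0 : ℝ) T, HasDerivAt h₁ (-α + h₁ t * h₂ t / (2 * κ)) t)
    ∧ h₁ T = 0 := by
  intro a c₁ h₂ h₁
  constructor
  · intro t ht
    have hat : a - t ≠ 0 := by
      have : 0 < κ / γ := div_pos hκ hγ
      have : t ≤ T := ht.2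
      simp only [a]
      linarith
    refine ((hasDerivAt_quadratic_numerator c₁ α a t).div_const_sub hat).congr_deriv ?_
    simp only [h₁, h₂]
    field_simp
  · simp only [h₁, c₁]
    ring

/-- With `a = T + κ/γ`, `c₁ = −½ᾱT² + aᾱT` and `h₂(t) = 2κ/(a−t)`, the function
`h₁(t) = (c₁ + ½ᾱt² − aᾱt)/(a − t)` is differentiable on `[0,T]` with
`h₁′(t) = −ᾱ + h₁(t)h₂(t)/(2κ)` and `h₁(T) = 0`. -/
theorem stmt_12 {T κ γ α : ℝ} (hT : 0 < T) (hκ : 0 < κ) (hγ : 0 < γ) :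
    let a : ℝ := T + κ / γ
    let c₁ : ℝ := -(1 / 2) * α * T ^ 2 + a * α * T
    let h₂ : ℝ → ℝ := fun t => 2 * κ / (a - t)
    let h₁ : ℝ → ℝ := fun t => (c₁ + (1 / 2) * α * t ^ 2 - a * α * t) / (a - t)
    (∀ t ∈ Set.Icc (0 : ℝ) T, HasDerivAt h₁ (-α + h₁ t * h₂ t / (2 * κ)) t)
    ∧ h₁ T = 0 :=
  stmt_12_general hκ hγ
end

section
/- Fix T > 0, κ > 0, γ > 0 and ᾱ ∈ ℝ. Set a = T + κ/γ, c₁ = −(1/2)ᾱT² + aᾱT, h₁(t) = ( c₁ + (1/2)ᾱ t² − a ᾱ t ) / (a − t), and define h₀(t) = (1/(4κ(a − t))) ( −(2/3)ᾱ²a⁴ + (2/3)ᾱ²a³t + 2ᾱa²c₁ + ᾱc₁t² − 2ᾱac₁t − c₁² + (1/12)ᾱ²t⁴ − (1/3)ᾱ²at³ ) for t ∈ [0,T]. Then h₀ is differentiable on [0,T] with h₀′(t) = − h₁(t)²/(4κ) for all t ∈ [0,T], and its terminal value is h₀(T) = − ᾱ²(a − T)³/(6κ) = − ᾱ²(κ/γ)³/(6κ).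 -/
/-!
In the variable `u = a - t`, and with `k = c₁ - ᾱa²/2`, the two coefficients become
`h₁ = k/u + ᾱu/2` and `h₀ = (-k²/u + ᾱku + ᾱ²u³/12)/(4κ)`, and the `u`-derivative of
`-k²/u + ᾱku + ᾱ²u³/12` is `(k/u + ᾱu/2)²`. For the terminal value, `k = -ᾱ(a - T)²/2`.
-/

/-- The paper's `h₁`, with an arbitrary constant `c` in place of `c₁`. -/
noncomputable def valueCoeff₁ (α a c t : ℝ) : ℝ :=
  (c + (1 / 2) * α * t ^ 2 - a * α * t) / (a - t)

/-- The paper's `h₀`, with an arbitrary constant `c` in place of `c₁`. -/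
noncomputable def valueCoeff₀ (κ α a c t : ℝ) : ℝ :=
  (1 / (4 * κ * (a - t))) *
    (-(2 / 3) * α ^ 2 * a ^ 4 + (2 / 3) * α ^ 2 * a ^ 3 * t + 2 * α * a ^ 2 * c
      + α * c * t ^ 2 - 2 * α * a * c * t - c ^ 2
      + (1 / 12) * α ^ 2 * t ^ 4 - (1 / 3) * α ^ 2 * a * t ^ 3)

lemma hasDerivAt_neg_sq_div_add {k α u : ℝ} (hu : u ≠ 0) :
    HasDerivAt (fun u => -k ^ 2 / u + α * k * u + α ^ 2 * u ^ 3 / 12)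
      ((k / u + α * u / 2) ^ 2) u := by
  have h : HasDerivAt (fun u => -k ^ 2 * u⁻¹ + α * k * u + α ^ 2 * u ^ 3 / 12)
      (-k ^ 2 * -(u ^ 2)⁻¹ + α * k * 1 + α ^ 2 * (3 * u ^ 2) / 12) u := by
    simpa using (((hasDerivAt_inv hu).const_mul (-k ^ 2)).fun_add
      ((hasDerivAt_id u).const_mul (α * k))).fun_add
      (((hasDerivAt_pow 3 u).const_mul (α ^ 2)).div_const 12)
  simp only [← div_eq_mul_inv] at h
  convert h using 1
  field_simp
  ring

lemma valueCoeff₁_eq {α a c t : ℝ} (ht : t ≠ a) :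
    valueCoeff₁ α a c t = (c - α * a ^ 2 / 2) / (a - t) + α * (a - t) / 2 := by
  have hu : a - t ≠ 0 := sub_ne_zero.mpr ht.symm
  unfold valueCoeff₁
  field_simp
  ring

lemma valueCoeff₀_numerator_eq (α a c t : ℝ) :
    -(2 / 3) * α ^ 2 * a ^ 4 + (2 / 3) * α ^ 2 * a ^ 3 * t + 2 * α * a ^ 2 * c
        + α * c * t ^ 2 - 2 * α * a * c * t - c ^ 2
        + (1 / 12) * α ^ 2 * t ^ 4 - (1 / 3) * α ^ 2 * a * t ^ 3
      = -(c - α * a ^ 2 / 2) ^ 2 + α * (c - α * a ^ 2 / 2) * (a - t) ^ 2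
        + α ^ 2 * (a - t) ^ 4 / 12 := by
  ring

lemma quartic_div_eq (k α u : ℝ) :
    (-k ^ 2 + α * k * u ^ 2 + α ^ 2 * u ^ 4 / 12) / u = -k ^ 2 / u + α * k * u + α ^ 2 * u ^ 3 / 12 := by
  rcases eq_or_ne u 0 with rfl | hu
  · simp
  · field_simp

lemma valueCoeff₀_eq (κ α a c t : ℝ) :
    valueCoeff₀ κ α a c t =
      (-(c - α * a ^ 2 / 2) ^ 2 / (a - t) + α * (c - α * a ^ 2 / 2) * (a - t)
        + α ^ 2 * (a - t) ^ 3 / 12) / (4 * κ) := by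
  rw [valueCoeff₀, valueCoeff₀_numerator_eq, ← quartic_div_eq]
  generalize a - t = u
  ring

lemma hasDerivAt_valueCoeff₀ {κ α a c t : ℝ} (ht : t ≠ a) :
    HasDerivAt (valueCoeff₀ κ α a c) (-valueCoeff₁ α a c t ^ 2 / (4 * κ)) t := by
  have hu : a - t ≠ 0 := sub_ne_zero.mpr ht.symm
  have h := ((hasDerivAt_neg_sq_div_add (k := c - α * a ^ 2 / 2) (α := α) hu).comp t
    ((hasDerivAt_id t).const_sub a)).div_const (4 * κ)
  rw [funext (valueCoeff₀_eq κ α a c), valueCoeff₁_eq ht]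
  exact h.congr_deriv (by ring)

lemma valueCoeff₀_terminal (κ α a T : ℝ) :
    valueCoeff₀ κ α a (-(1 / 2) * α * T ^ 2 + a * α * T) T = -α ^ 2 * (a - T) ^ 3 / (6 * κ) := by
  rw [valueCoeff₀_eq]
  have hk : -(1 / 2) * α * T ^ 2 + a * α * T - α * a ^ 2 / 2 = -α * (a - T) ^ 2 / 2 := by ring
  rw [hk]
  rcases eq_or_ne (a - T) 0 with hu | hu
  · simp [hu]
  · field_simp
    ring

theorem stmt_13_general {T κ γ α : ℝ} (hκ : 0 < κ) (hγ : 0 < γ) :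
    let a : ℝ := T + κ / γ
    let c₁ : ℝ := -(1 / 2) * α * T ^ 2 + a * α * T
    let h₁ : ℝ → ℝ := fun t => (c₁ + (1 / 2) * α * t ^ 2 - a * α * t) / (a - t)
    let h₀ : ℝ → ℝ := fun t => (1 / (4 * κ * (a - t))) *
      (-(2 / 3) * α ^ 2 * a ^ 4 + (2 / 3) * α ^ 2 * a ^ 3 * t + 2 * α * a ^ 2 * c₁
        + α * c₁ * t ^ 2 - 2 * α * a * c₁ * t - c₁ ^ 2
        + (1 / 12) * α ^ 2 * t ^ 4 - (1 / 3) * α ^ 2 * a * t ^ 3)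
    (∀ t ∈ Set.Icc (0 : ℝ) T, HasDerivAt h₀ (-(h₁ t) ^ 2 / (4 * κ)) t)
    ∧ h₀ T = -α ^ 2 * (a - T) ^ 3 / (6 * κ)
    ∧ h₀ T = -α ^ 2 * (κ / γ) ^ 3 / (6 * κ) := by
  intro a c₁ h₁ h₀
  have haT : a - T = κ / γ := add_sub_cancel_left T (κ / γ)
  have hterminal : h₀ T = -α ^ 2 * (a - T) ^ 3 / (6 * κ) := valueCoeff₀_terminal κ α a T
  refine ⟨fun t ht => hasDerivAt_valueCoeff₀ (ne_of_lt ?_), hterminal, haT ▸ hterminal⟩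
  linarith [ht.2, div_pos hκ hγ]

/-- With `a = T + κ/γ`, `c₁ = −½ᾱT² + aᾱT` and
`h₁(t) = (c₁ + ½ᾱt² − aᾱt)/(a − t)`, the explicit function
`h₀(t) = (1/(4κ(a−t)))(−⅔ᾱ²a⁴ + ⅔ᾱ²a³t + 2ᾱa²c₁ + ᾱc₁t² − 2ᾱac₁t − c₁² + (1/12)ᾱ²t⁴ − ⅓ᾱ²at³)`
is differentiable on `[0,T]` with `h₀′(t) = −h₁(t)²/(4κ)`, and its terminal value is
`h₀(T) = −ᾱ²(a−T)³/(6κ) = −ᾱ²(κ/γ)³/(6κ)`. -/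
theorem stmt_13 {T κ γ α : ℝ} (hT : 0 < T) (hκ : 0 < κ) (hγ : 0 < γ) :
    let a : ℝ := T + κ / γ
    let c₁ : ℝ := -(1 / 2) * α * T ^ 2 + a * α * T
    let h₁ : ℝ → ℝ := fun t => (c₁ + (1 / 2) * α * t ^ 2 - a * α * t) / (a - t)
    let h₀ : ℝ → ℝ := fun t => (1 / (4 * κ * (a - t))) *
      (-(2 / 3) * α ^ 2 * a ^ 4 + (2 / 3) * α ^ 2 * a ^ 3 * t + 2 * α * a ^ 2 * c₁
        + α * c₁ * t ^ 2 - 2 * α * a * c₁ * t - c₁ ^ 2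
        + (1 / 12) * α ^ 2 * t ^ 4 - (1 / 3) * α ^ 2 * a * t ^ 3)
    (∀ t ∈ Set.Icc (0 : ℝ) T, HasDerivAt h₀ (-(h₁ t) ^ 2 / (4 * κ)) t)
    ∧ h₀ T = -α ^ 2 * (a - T) ^ 3 / (6 * κ)
    ∧ h₀ T = -α ^ 2 * (κ / γ) ^ 3 / (6 * κ) :=
  stmt_13_general hκ hγ
end

section
/- Fix T > 0, κ > 0, γ > 0, λ ≥ 0, μ̄ ∈ ℝ, σ ∈ ℝ, and let η be a Borel probability measure on (0,∞) with finite mean η̄; set ᾱ = μ̄ − λη̄. Suppose h₀, h₁, h₂ : [0,T] → ℝ are differentiable with h₂′ = h₂²/(2κ), h₁′ = −ᾱ + h₁h₂/(2κ), h₀′ = −h₁²/(4κ) on [0,T] and h₂(T) = 2γ, h₁(T) = 0, h₀(T) = 0. Then u(t,q,e) = e + h₀(t) + h₁(t)q − (1/2)h₂(t)q² satisfies, for every (t,q,e) ∈ [0,T] × ℝ × ℝ, the semilinear PIDE u_t + q μ̄ u_e + (1/2)σ²q² u_{ee} + λ ∫₀^∞ [ u(t,q,e − qz) − u(t,q,e)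 ] η(dz) + (1/(4κ)) u_q²/u_e = 0, together with the terminal condition u(T,q,e) = e − γ q². -/
/-!
The ansatz is affine in the equity `e` with unit slope, so `u_e = 1`, `u_ee = 0` and the jump
term is linear in the claim size: `u(t,q,e - qz) - u(t,q,e) = -qz`, which integrates to `-q η̄`.
The PIDE thus collapses to `v_t + ᾱ q + v_q² / (4κ) = 0` for the quadratic `v = h₀ + h₁ q - ½ h₂ q²`,
whose `q`-derivative is `h₁ - h₂ q`; the coefficients of `1`, `q` and `q²` vanish precisely by the
three Riccati equations, and the terminal values of `h₀, h₁, h₂` give `u(T,q,e) = e - γ q²`.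
-/

open MeasureTheory

noncomputable def quadraticValue (h₀ h₁ h₂ : ℝ → ℝ) (t q e : ℝ) : ℝ :=
  e + h₀ t + h₁ t * q - (1 / 2) * h₂ t * q ^ 2

namespace quadraticValue

variable {h₀ h₁ h₂ : ℝ → ℝ} {t q e : ℝ}

theorem hasDerivAt_time {d₀ d₁ d₂ : ℝ} (H₀ : HasDerivAt h₀ d₀ t) (H₁ : HasDerivAt h₁ d₁ t)
    (H₂ : HasDerivAt h₂ d₂ t) :
    HasDerivAt (fun s => quadraticValue h₀ h₁ h₂ s q e)
      (d₀ + d₁ * q - (1 / 2) * d₂ * q ^ 2) t := by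
  have := (((hasDerivAt_const t e).add H₀).add (H₁.mul_const q)).sub
    ((H₂.const_mul (1 / 2)).mul_const (q ^ 2))
  exact this.congr_deriv (by ring)

theorem hasDerivAt_inventory :
    HasDerivAt (fun q' => quadraticValue h₀ h₁ h₂ t q' e) (h₁ t - h₂ t * q) q := by
  have := (((hasDerivAt_id q).const_mul (h₁ t)).const_add (e + h₀ t)).sub
    ((hasDerivAt_pow 2 q).const_mul ((1 / 2) * h₂ t))
  exact this.congr_deriv (by simp only [Nat.cast_ofNat, Nat.add_one_sub_one, pow_one]; ring)

theorem deriv_equity : deriv (fun e' => quadraticValue h₀ h₁ h₂ t q e') = fun _ => 1 := by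
  funext x
  simp [quadraticValue]

theorem iteratedDeriv_two_equity :
    iteratedDeriv 2 (fun e' => quadraticValue h₀ h₁ h₂ t q e') e = 0 := by
  rw [iteratedDeriv_succ, iteratedDeriv_one, deriv_equity, deriv_const]

theorem integral_jump (η : Measure ℝ) :
    ∫ z, (quadraticValue h₀ h₁ h₂ t q (e - q * z) - quadraticValue h₀ h₁ h₂ t q e) ∂η
      = -q * ∫ z, z ∂η := by
  simp only [quadraticValue]
  rw [← integral_const_mul]
  congr 1
  funext z
  ring

end quadraticValue

theorem stmt_16_general {T κ γ lam μ σ : ℝ}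
    (η : Measure ℝ)
    (h₀ h₁ h₂ : ℝ → ℝ)
    (hd2 : ∀ t ∈ Set.Icc (0 : ℝ) T,
      HasDerivAt h₂ ((h₂ t) ^ 2 / (2 * κ)) t)
    (hd1 : ∀ t ∈ Set.Icc (0 : ℝ) T,
      HasDerivAt h₁ (-(μ - lam * ∫ z, z ∂η) + h₁ t * h₂ t / (2 * κ)) t)
    (hd0 : ∀ t ∈ Set.Icc (0 : ℝ) T, HasDerivAt h₀ (-(h₁ t) ^ 2 / (4 * κ)) t)
    (hT2 : h₂ T = 2 * γ) (hT1 : h₁ T = 0) (hT0 : h₀ T = 0) :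
    ∀ t ∈ Set.Icc (0 : ℝ) T, ∀ q e : ℝ,
      let u : ℝ → ℝ → ℝ → ℝ := fun t q e => e + h₀ t + h₁ t * q - (1 / 2) * h₂ t * q ^ 2
      (deriv (fun s => u s q e) t
        + q * μ * deriv (fun e' => u t q e') e
        + (1 / 2) * σ ^ 2 * q ^ 2 * iteratedDeriv 2 (fun e' => u t q e') e
        + lam * ∫ z, (u t q (e - q * z) - u t q e) ∂η
        + (1 / (4 * κ)) * (deriv (fun q' => u t q' e) q) ^ 2
            / deriv (fun e' => u t q e') e = 0)
      ∧ u T q e = e - γ * q ^ 2 := by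
  intro t ht q e u
  have hu : u = quadraticValue h₀ h₁ h₂ := rfl
  rw [hu]
  refine ⟨?_, by simp only [quadraticValue, hT0, hT1, hT2]; ring⟩
  rw [(quadraticValue.hasDerivAt_time (hd0 t ht) (hd1 t ht) (hd2 t ht)).deriv,
    quadraticValue.deriv_equity, quadraticValue.iteratedDeriv_two_equity,
    quadraticValue.integral_jump, quadraticValue.hasDerivAt_inventory.deriv]
  ring

/-- **Explicit solution of the HJB PIDE for the unconstrained insurance problem.**
If `h₂′ = h₂²/(2κ)`, `h₁′ = −ᾱ + h₁h₂/(2κ)`, `h₀′ = −h₁²/(4κ)` on `[0,T]` with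
`h₂(T) = 2γ`, `h₁(T) = 0`, `h₀(T) = 0` and `ᾱ = μ̄ − λη̄`, then
`u(t,q,e) = e + h₀(t) + h₁(t)q − ½h₂(t)q²` satisfies the semilinear PIDE
`u_t + qμ̄u_e + ½σ²q²u_{ee} + λ∫(u(t,q,e−qz) − u(t,q,e))η(dz) + (1/(4κ))u_q²/u_e = 0`
on `[0,T] × ℝ × ℝ`, with terminal condition `u(T,q,e) = e − γq²`. -/
theorem stmt_16 {T κ γ lam μ σ : ℝ} (hT : 0 < T) (hκ : 0 < κ) (hγ : 0 < γ)
    (hlam : 0 ≤ lam)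
    (η : Measure ℝ) [IsProbabilityMeasure η] (hη : η (Set.Iic 0) = 0)
    (hmean : Integrable (fun z : ℝ => z) η)
    (h₀ h₁ h₂ : ℝ → ℝ)
    (hd2 : ∀ t ∈ Set.Icc (0 : ℝ) T,
      HasDerivAt h₂ ((h₂ t) ^ 2 / (2 * κ)) t)
    (hd1 : ∀ t ∈ Set.Icc (0 : ℝ) T,
      HasDerivAt h₁ (-(μ - lam * ∫ z, z ∂η) + h₁ t * h₂ t / (2 * κ)) t)
    (hd0 : ∀ t ∈ Set.Icc (0 : ℝ) T, HasDerivAt h₀ (-(h₁ t) ^ 2 / (4 * κ)) t)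
    (hT2 : h₂ T = 2 * γ) (hT1 : h₁ T = 0) (hT0 : h₀ T = 0) :
    ∀ t ∈ Set.Icc (0 : ℝ) T, ∀ q e : ℝ,
      let u : ℝ → ℝ → ℝ → ℝ := fun t q e => e + h₀ t + h₁ t * q - (1 / 2) * h₂ t * q ^ 2
      (deriv (fun s => u s q e) t
        + q * μ * deriv (fun e' => u t q e') e
        + (1 / 2) * σ ^ 2 * q ^ 2 * iteratedDeriv 2 (fun e' => u t q e') e
        + lam * ∫ z, (u t q (e - q * z) - u t q e) ∂η
        + (1 / (4 * κ)) * (deriv (fun q' => u t q' e) q) ^ 2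
            / deriv (fun e' => u t q e') e = 0)
      ∧ u T q e = e - γ * q ^ 2 :=
  stmt_16_general η h₀ h₁ h₂ hd2 hd1 hd0 hT2 hT1 hT0
end
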